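/- arXiv:2410.14366 — 4 statements merged into one kernel-verified Lean document; each statement's English description precedes it below -/
import Mathlib

section
/- Let σ_x = !![0, 1; 1, 0] be the Pauli X matrix over ℂ. For every real number x with −1 ≤ x ≤ 1, the single-qubit rotation W(x) := exp((i · arccos x) • σ_x) equals the 2 × 2 complex matrix !![x, i·√(1−x²); i·√(1−x²), x]. -/
/-!
Since `σ_x * σ_x = 1`, the even terms of the exponential series of `z • σ_x` are scalars and the
odd terms multiples of `σ_x`, so `exp (z • σ_x) = cosh z • 1 + sinh z • σ_x`. For `z = i θ` this is
`cos θ • 1 + (i sin θ) • σ_x`, and `θ = arccos x` gives `cos θ = x`, `sin θ = √(1 - x²)`.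
-/

open NormedSpace Complex

open scoped Nat

section Involution

variable {𝔸 : Type*} [Ring 𝔸] [Algebra ℂ 𝔸] [TopologicalSpace 𝔸] [IsTopologicalRing 𝔸]
  [ContinuousSMul ℂ 𝔸] [T2Space 𝔸]

theorem exp_smul_of_mul_self_eq_one {A : 𝔸} (hA : A * A = 1) (z : ℂ) :
    exp (z • A) = cosh z • (1 : 𝔸) + sinh z • A := by
  have hpow_even (n : ℕ) : A ^ (2 * n) = 1 := by rw [pow_mul, sq, hA, one_pow]
  have hseries :
      HasSum (fun n => ((n !⁻¹ : ℂ) * z ^ n) • A ^ n) (cosh z • (1 : 𝔸) + sinh z • A) := by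
    refine HasSum.even_add_odd ?_ ?_
    · simpa [hpow_even, div_eq_inv_mul] using (hasSum_cosh z).smul_const (1 : 𝔸)
    · simpa [pow_succ, hpow_even, div_eq_inv_mul] using (hasSum_sinh z).smul_const A
  rw [exp_eq_tsum ℂ, ← hseries.tsum_eq]
  simp_rw [smul_pow, smul_smul]

theorem exp_I_mul_smul_of_mul_self_eq_one {A : 𝔸} (hA : A * A = 1) (θ : ℂ) :
    exp ((I * θ) • A) = cos θ • (1 : 𝔸) + (I * sin θ) • A := by
  rw [exp_smul_of_mul_self_eq_one hA, mul_comm, cosh_mul_I, sinh_mul_I, mul_comm]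

end Involution

theorem pauliX_mul_self {R : Type*} [Semiring R] :
    (!![0, 1; 1, 0] : Matrix (Fin 2) (Fin 2) R) * !![0, 1; 1, 0] = 1 := by
  rw [Matrix.mul_fin_two, Matrix.one_fin_two]
  simp

/-- The QSP signal rotation: for `x ∈ [-1,1]`,
`W(x) = exp((i arccos x) • σ_x) = !![x, i√(1-x²); i√(1-x²), x]`. -/
theorem exp_arccos_smul_pauli_x (x : ℝ) (hx : -1 ≤ x) (hx' : x ≤ 1) :
    exp ((Complex.I * Real.arccos x) • (!![0, 1; 1, 0] : Matrix (Fin 2) (Fin 2) ℂ)) =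
      !![(x : ℂ), Complex.I * Real.sqrt (1 - x ^ 2);
         Complex.I * Real.sqrt (1 - x ^ 2), (x : ℂ)] := by
  have hcos : cos (Real.arccos x) = x := by rw [← ofReal_cos, Real.cos_arccos hx hx']
  have hsin : sin (Real.arccos x) = Real.sqrt (1 - x ^ 2) := by rw [← ofReal_sin, Real.sin_arccos]
  rw [exp_I_mul_smul_of_mul_self_eq_one pauliX_mul_self, hcos, hsin]
  ext i j
  fin_cases i <;> fin_cases j <;> simp
end

section
/- Let k be a natural number and let P, Q be complex polynomials with deg P ≤ k, deg Q ≤ k − 1, P having the same parity as k, Q having the same parity as k − 1, and satisfying |P(x)|² + (1 − x²)·|Q(x)|² = 1 for all x ∈ [−1, 1]. Then there exist real angles θ_0, θ_1, …, θ_k such that for all x ∈ [−1, 1], Z(θ_0) · ∏_{j=1}^{k} (W(x) · Z(θ_j)) = !![P(x), i·Q(x)·√(1−x²); i·conj(Q(x))·√(1−x²), conj(P(x))], where W(x) = !![x, i√(1−x²); i√(1−x²), x] and Z(θ) = !![e^{iθ}, 0; 0, e^{−iθ}]. In particular, the top-left entry of this product of single-qubit rotations realizes (block-encodes) the prescribed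 polynomial P(x). -/
/-!
Write `U(P, Q)(x)` for the target matrix. As `[-1, 1]` is infinite, the normalisation is the
polynomial identity `P P̄ + (1 - X²) Q Q̄ = 1`, and its coefficient of `X^(2k)` gives
`|P_k| = |Q_(k-1)|`. With `θ_k` chosen to balance the phases of `P_k` and `Q_(k-1)`, the matrix
`U(P, Q)(x) (W(x) Z(θ_k))⁻¹` is `U(P', Q')(x)` for polynomials `P', Q'` whose a priori top
coefficients cancel, so that by parity they drop to degrees `k - 1`, `k - 2`; they still satisfy
the identity. Peeling off one factor at a time leaves `k = 0`, where `Q = 0` and `P = e^{iθ_0}`.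
-/

open Complex Polynomial

/-- The QSP signal rotation `W(x)`. -/
noncomputable def qspW (x : ℝ) : Matrix (Fin 2) (Fin 2) ℂ :=
  !![(x : ℂ), Complex.I * Real.sqrt (1 - x ^ 2);
     Complex.I * Real.sqrt (1 - x ^ 2), (x : ℂ)]

/-- The z-rotation `Z(θ) = !![e^{iθ}, 0; 0, e^{-iθ}]`. -/
noncomputable def qspZ (θ : ℝ) : Matrix (Fin 2) (Fin 2) ℂ :=
  !![Complex.exp (Complex.I * θ), 0; 0, Complex.exp (-(Complex.I * θ))]

namespace Polynomial

variable (R : Type*) [Semiring R]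

/-- Polynomials of degree at most `m` with the parity of `m`. Indexed by `ℤ` so that
`parityDegreeLE R (k - 1)` is `⊥` for `k = 0`. -/
def parityDegreeLE (m : ℤ) : Submodule R R[X] where
  carrier := {P | ∀ n : ℕ, P.coeff n ≠ 0 → (n : ℤ) ≤ m ∧ (n : ℤ) % 2 = m % 2}
  zero_mem' := by simp
  add_mem' {P Q} hP hQ n hn := by
    by_cases hPn : P.coeff n = 0
    · exact hQ n (by simpa [hPn] using hn)
    · exact hP n hPn
  smul_mem' a P hP n hn := hP n (right_ne_zero_of_mul (by simpa using hn))

variable {R}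

theorem mem_parityDegreeLE {m : ℤ} {P : R[X]} :
    P ∈ parityDegreeLE R m ↔ ∀ n : ℕ, P.coeff n ≠ 0 → (n : ℤ) ≤ m ∧ (n : ℤ) % 2 = m % 2 :=
  Iff.rfl

theorem mul_mem_parityDegreeLE {m m' : ℤ} {P Q : R[X]} (hP : P ∈ parityDegreeLE R m)
    (hQ : Q ∈ parityDegreeLE R m') : P * Q ∈ parityDegreeLE R (m + m') := by
  intro n hn
  rw [coeff_mul] at hn
  obtain ⟨⟨i, j⟩, hij, hne⟩ := Finset.exists_ne_zero_of_sum_ne_zero hn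
  rw [Finset.HasAntidiagonal.mem_antidiagonal] at hij
  simp only at hne
  have hi := hP i (left_ne_zero_of_mul hne)
  have hj := hQ j (right_ne_zero_of_mul hne)
  omega

theorem X_mem_parityDegreeLE : (X : R[X]) ∈ parityDegreeLE R 1 := by
  intro n hn
  rw [coeff_X] at hn
  split_ifs at hn with h
  · simp [← h]
  · exact absurd rfl hn

theorem one_sub_X_sq_mem_parityDegreeLE {R : Type*} [Ring R] :
    (1 - X ^ 2 : R[X]) ∈ parityDegreeLE R 2 := by
  intro n hn
  rw [coeff_sub, coeff_one, coeff_X_pow] at hn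
  split_ifs at hn with h0 h2 <;> simp_all

theorem parityDegreeLE_neg_one : parityDegreeLE R (-1) = ⊥ := by
  refine (Submodule.eq_bot_iff _).2 fun P hP => ext fun n => ?_
  by_contra hn
  have := hP n hn
  omega

theorem natDegree_le_of_mem_parityDegreeLE {n : ℕ} {P : R[X]} (hP : P ∈ parityDegreeLE R n) :
    P.natDegree ≤ n :=
  natDegree_le_iff_coeff_eq_zero.2 fun N hN => by
    by_contra h
    have := hP N h
    omega

theorem mem_parityDegreeLE_sub_two {n : ℕ} {P : R[X]} (hP : P ∈ parityDegreeLE R n)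
    (htop : P.coeff n = 0) : P ∈ parityDegreeLE R (n - 2) := by
  intro N hN
  have := hP N hN
  have hNn : N ≠ n := by rintro rfl; exact hN htop
  omega

end Polynomial

theorem eval_map_conj_ofReal (P : ℂ[X]) (x : ℝ) :
    (P.map (starRingEnd ℂ)).eval (x : ℂ) = starRingEnd ℂ (P.eval (x : ℂ)) := by
  rw [← eval_map_apply, conj_ofReal]

def IsQSPPair (P Q : ℂ[X]) : Prop :=
  P * P.map (starRingEnd ℂ) + (1 - X ^ 2) * (Q * Q.map (starRingEnd ℂ)) = 1

theorem isQSPPair_of_norm_sq {P Q : ℂ[X]} (h : ∀ x : ℝ, -1 ≤ x → x ≤ 1 →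
      ‖P.eval (x : ℂ)‖ ^ 2 + (1 - x ^ 2) * ‖Q.eval (x : ℂ)‖ ^ 2 = 1) :
    IsQSPPair P Q := by
  refine eq_of_infinite_eval_eq _ _ <|
    ((Set.Icc_infinite (by norm_num : (-1 : ℝ) < 1)).image ofReal_injective.injOn).mono ?_
  rintro _ ⟨x, ⟨hx₁, hx₂⟩, rfl⟩
  have hx := congrArg ((↑) : ℝ → ℂ) (h x hx₁ hx₂)
  push_cast at hx
  simp only [Set.mem_ofPred_eq, eval_add, eval_mul, eval_sub, eval_one, eval_pow, eval_X,
    eval_map_conj_ofReal, mul_conj']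
  exact hx

theorem IsQSPPair.norm_coeff_eq {P Q : ℂ[X]} (h : IsQSPPair P Q) {k : ℕ}
    (hP : P.natDegree ≤ k + 1) (hQ : Q.natDegree ≤ k) :
    ‖P.coeff (k + 1)‖ = ‖Q.coeff k‖ := by
  have hP' : (P.map (starRingEnd ℂ)).natDegree ≤ k + 1 := (natDegree_map _).trans_le hP
  have hQ' : (Q.map (starRingEnd ℂ)).natDegree ≤ k := (natDegree_map _).trans_le hQ
  have hQQ : (Q * Q.map (starRingEnd ℂ)).coeff (k + k + 2) = 0 :=
    coeff_eq_zero_of_natDegree_lt <| natDegree_mul_le.trans_lt (by omega)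
  have := congrArg (coeff · (k + 1 + (k + 1))) h
  simp only [sub_mul, one_mul, coeff_add, coeff_sub, coeff_mul_add_eq_of_natDegree_le hP hP',
    coeff_map, coeff_one] at this
  rw [show k + 1 + (k + 1) = k + k + 2 by ring, coeff_X_pow_mul,
    coeff_mul_add_eq_of_natDegree_le hQ hQ', hQQ, coeff_map, mul_conj', mul_conj'] at this
  rw [if_neg (by omega)] at this
  have hsq : (‖P.coeff (k + 1)‖ : ℂ) ^ 2 = (‖Q.coeff k‖ : ℂ) ^ 2 := by linear_combination this
  exact (pow_left_inj₀ (norm_nonneg _) (norm_nonneg _) two_ne_zero).1 (mod_cast hsq)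

theorem conj_exp_I_mul_ofReal (θ : ℝ) : starRingEnd ℂ (exp (I * θ)) = exp (-(I * θ)) := by
  rw [← exp_conj, map_mul, conj_I, conj_ofReal, neg_mul]

theorem exists_conj_exp_mul_eq_exp_mul {p q : ℂ} (h : ‖p‖ = ‖q‖) :
    ∃ θ : ℝ, starRingEnd ℂ (exp (I * θ)) * p = exp (I * θ) * q := by
  refine ⟨(p.arg - q.arg) / 2, ?_⟩
  calc _ = exp (-(I * ((p.arg - q.arg) / 2 : ℝ))) * (‖p‖ * exp (p.arg * I)) := by
        rw [conj_exp_I_mul_ofReal, norm_mul_exp_arg_mul_I]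
    _ = exp (I * ((p.arg - q.arg) / 2 : ℝ)) * (‖q‖ * exp (q.arg * I)) := by
        rw [h, mul_left_comm, ← exp_add, mul_left_comm _ (‖q‖ : ℂ), ← exp_add]
        push_cast
        ring_nf
    _ = _ := by rw [norm_mul_exp_arg_mul_I]

/-- Read off from `qspBlock P Q x * (qspW x * qspZ θ)⁻¹` with `u = exp (I * θ)`. -/
noncomputable def qspReduceP (u : ℂ) (P Q : ℂ[X]) : ℂ[X] :=
  starRingEnd ℂ u • (X * P) + u • ((1 - X ^ 2) * Q)

noncomputable def qspReduceQ (u : ℂ) (P Q : ℂ[X]) : ℂ[X] :=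
  u • (X * Q) - starRingEnd ℂ u • P

section Reduce

variable {k : ℕ} {u : ℂ} {P Q : ℂ[X]}

theorem qspReduceP_mem (hP : P ∈ parityDegreeLE ℂ (k + 1)) (hQ : Q ∈ parityDegreeLE ℂ k)
    (htop : starRingEnd ℂ u * P.coeff (k + 1) = u * Q.coeff k) :
    qspReduceP u P Q ∈ parityDegreeLE ℂ k := by
  have hmem : qspReduceP u P Q ∈ parityDegreeLE ℂ ((k + 2 : ℕ) : ℤ) := by
    have hXP := mul_mem_parityDegreeLE X_mem_parityDegreeLE hP
    have hQ' := mul_mem_parityDegreeLE one_sub_X_sq_mem_parityDegreeLE hQ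
    refine add_mem (Submodule.smul_mem _ _ ?_) (Submodule.smul_mem _ _ ?_)
    · rwa [show ((k + 2 : ℕ) : ℤ) = 1 + (k + 1) by omega]
    · rwa [show ((k + 2 : ℕ) : ℤ) = 2 + k by omega]
  have htop' : (qspReduceP u P Q).coeff (k + 2) = 0 := by
    have hQk : Q.coeff (k + 2) = 0 :=
      coeff_eq_zero_of_natDegree_lt ((natDegree_le_of_mem_parityDegreeLE hQ).trans_lt (by omega))
    simp only [qspReduceP, coeff_add, coeff_smul, coeff_X_mul, sub_mul, one_mul, coeff_sub,
      coeff_X_pow_mul, hQk, smul_eq_mul]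
    linear_combination htop
  simpa using mem_parityDegreeLE_sub_two hmem htop'

theorem qspReduceQ_mem (hP : P ∈ parityDegreeLE ℂ (k + 1)) (hQ : Q ∈ parityDegreeLE ℂ k)
    (htop : starRingEnd ℂ u * P.coeff (k + 1) = u * Q.coeff k) :
    qspReduceQ u P Q ∈ parityDegreeLE ℂ (k - 1) := by
  have hmem : qspReduceQ u P Q ∈ parityDegreeLE ℂ ((k + 1 : ℕ) : ℤ) := by
    have hXQ := mul_mem_parityDegreeLE X_mem_parityDegreeLE hQ
    refine sub_mem (Submodule.smul_mem _ _ ?_) (Submodule.smul_mem _ _ ?_)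
    · rwa [show ((k + 1 : ℕ) : ℤ) = 1 + k by omega]
    · simpa using hP
  have htop' : (qspReduceQ u P Q).coeff (k + 1) = 0 := by
    simp only [qspReduceQ, coeff_sub, coeff_smul, coeff_X_mul, smul_eq_mul]
    linear_combination -htop
  convert mem_parityDegreeLE_sub_two hmem htop' using 2
  omega

theorem IsQSPPair.qspReduce (h : IsQSPPair P Q) (hu : ‖u‖ = 1) :
    IsQSPPair (qspReduceP u P Q) (qspReduceQ u P Q) := by
  have huu : C u * C (starRingEnd ℂ u) = 1 := by
    rw [← C_mul, mul_conj', hu]; simp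
  simp only [IsQSPPair, qspReduceP, qspReduceQ, smul_eq_C_mul, Polynomial.map_add,
    Polynomial.map_sub, Polynomial.map_mul, map_C, map_X, Polynomial.map_pow, Polynomial.map_one,
    conj_conj] at h ⊢
  linear_combination C u * C (starRingEnd ℂ u) * h + huu

end Reduce

noncomputable def qspBlock (P Q : ℂ[X]) (x : ℝ) : Matrix (Fin 2) (Fin 2) ℂ :=
  !![P.eval (x : ℂ), I * Q.eval (x : ℂ) * Real.sqrt (1 - x ^ 2);
     I * starRingEnd ℂ (Q.eval (x : ℂ)) * Real.sqrt (1 - x ^ 2), starRingEnd ℂ (P.eval (x : ℂ))]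

theorem qspZ_eq_qspBlock (θ x : ℝ) : qspZ θ = qspBlock (C (exp (I * θ))) 0 x := by
  simp [qspZ, qspBlock, conj_exp_I_mul_ofReal]

theorem qspBlock_qspReduce_mul (P Q : ℂ[X]) {θ x : ℝ} (hx : x ^ 2 ≤ 1) :
    qspBlock (qspReduceP (exp (I * θ)) P Q) (qspReduceQ (exp (I * θ)) P Q) x *
      (qspW x * qspZ θ) = qspBlock P Q x := by
  simp only [qspBlock, qspReduceP, qspReduceQ, qspW, qspZ, ← conj_exp_I_mul_ofReal, eval_add,
    eval_sub, eval_smul, eval_mul, eval_X, eval_one, eval_pow, smul_eq_mul, map_add, map_sub,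
    map_mul, map_one, map_pow, conj_conj, conj_ofReal, Matrix.mul_fin_two]
  set u := exp (I * θ)
  have hu : u * starRingEnd ℂ u = 1 := by
    rw [mul_conj', norm_exp_I_mul_ofReal]; simp
  set v := starRingEnd ℂ u
  set s : ℂ := ((Real.sqrt (1 - x ^ 2) : ℝ) : ℂ)
  have hs : s ^ 2 = 1 - x ^ 2 := by
    rw [← ofReal_pow, Real.sq_sqrt (by linarith)]; push_cast; ring
  set a := P.eval (x : ℂ)
  set b := Q.eval (x : ℂ)
  ext i j
  fin_cases i <;> fin_cases j <;>
    simp only [Matrix.of_apply, Matrix.cons_val', Matrix.cons_val_zero, Matrix.cons_val_one,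
      Matrix.empty_val', Matrix.cons_val_fin_one, Fin.zero_eta, Fin.mk_one]
  · linear_combination a * hu + s ^ 2 * u * (u * x * b - v * a) * I_sq
      - u * (u * x * b - v * a) * hs
  · linear_combination I * s * b * hu
  · linear_combination I * s * starRingEnd ℂ b * hu
  · linear_combination starRingEnd ℂ a * hu
      + s ^ 2 * v * (v * x * starRingEnd ℂ b - u * starRingEnd ℂ a) * I_sq
      - v * (v * x * starRingEnd ℂ b - u * starRingEnd ℂ a) * hs

noncomputable def qspProduct {k : ℕ} (θ : Fin (k + 1) → ℝ) (x : ℝ) : Matrix (Fin 2) (Fin 2) ℂ :=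
  qspZ (θ 0) * (List.ofFn fun j : Fin k => qspW x * qspZ (θ j.succ)).prod

theorem qspProduct_snoc {k : ℕ} (θ : Fin (k + 1) → ℝ) (φ x : ℝ) :
    qspProduct (Fin.snoc θ φ : Fin (k + 2) → ℝ) x = qspProduct θ x * (qspW x * qspZ φ) := by
  simp only [qspProduct, List.ofFn_succ', List.prod_concat, Fin.succ_castSucc, Fin.snoc_castSucc,
    Fin.succ_last, Fin.snoc_last, mul_assoc]
  rfl

theorem exists_qspProduct_eq_qspBlock (k : ℕ) {P Q : ℂ[X]} (hP : P ∈ parityDegreeLE ℂ k)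
    (hQ : Q ∈ parityDegreeLE ℂ (k - 1)) (h : IsQSPPair P Q) :
    ∃ θ : Fin (k + 1) → ℝ, ∀ x : ℝ, -1 ≤ x → x ≤ 1 → qspProduct θ x = qspBlock P Q x := by
  induction k generalizing P Q with
  | zero =>
    rw [Nat.cast_zero, zero_sub, parityDegreeLE_neg_one, Submodule.mem_bot] at hQ
    subst hQ
    rw [eq_C_of_natDegree_le_zero (natDegree_le_of_mem_parityDegreeLE hP)] at h ⊢
    set a := P.coeff 0
    have ha : ‖a‖ = 1 := by
      have hC : C ((‖a‖ : ℂ) ^ 2) = C 1 := by simpa [IsQSPPair, ← C_mul, mul_conj'] using h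
      have hsq : (‖a‖ : ℂ) ^ 2 = 1 := C_inj.1 hC
      exact (pow_eq_one_iff_of_nonneg (norm_nonneg a) two_ne_zero).1 (mod_cast hsq)
    have hexp : exp (I * a.arg) = a := by simpa [ha, mul_comm] using norm_mul_exp_arg_mul_I a
    refine ⟨fun _ => a.arg, fun x _ _ => ?_⟩
    rw [qspProduct, List.ofFn_zero, List.prod_nil, mul_one, qspZ_eq_qspBlock _ x, hexp]
  | succ k ih =>
    rw [Nat.cast_succ, add_sub_cancel_right] at hQ
    obtain ⟨θ, hθ⟩ := exists_conj_exp_mul_eq_exp_mul <| h.norm_coeff_eq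
      (natDegree_le_of_mem_parityDegreeLE hP) (natDegree_le_of_mem_parityDegreeLE hQ)
    obtain ⟨φ, hφ⟩ := ih (qspReduceP_mem hP hQ hθ) (qspReduceQ_mem hP hQ hθ)
      (h.qspReduce (norm_exp_I_mul_ofReal θ))
    refine ⟨Fin.snoc φ θ, fun x hx₁ hx₂ => ?_⟩
    rw [qspProduct_snoc, hφ x hx₁ hx₂, qspBlock_qspReduce_mul P Q (by nlinarith)]

/-- Quantum signal processing, angle-finding direction: given polynomials `P, Q` with
`deg P ≤ k`, `deg Q ≤ k-1`, `P` of the parity of `k`, `Q` of the parity of `k-1`, and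
`|P(x)|² + (1-x²)|Q(x)|² = 1` on `[-1,1]`, there exist angles `θ_0, …, θ_k` whose
alternating product of rotations block-encodes `P`. -/
theorem qsp_exists_angles (k : ℕ) (P Q : Polynomial ℂ)
    (hP : P.degree ≤ (k : ℕ)) (hQ : Q.degree < (k : ℕ))
    (hPpar : ∀ n : ℕ, P.coeff n ≠ 0 → n % 2 = k % 2)
    (hQpar : ∀ n : ℕ, Q.coeff n ≠ 0 → n % 2 = (k - 1) % 2)
    (hnorm : ∀ x : ℝ, -1 ≤ x → x ≤ 1 →
      ‖P.eval (x : ℂ)‖ ^ 2 +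
        (1 - x ^ 2) * ‖Q.eval (x : ℂ)‖ ^ 2 = 1) :
    ∃ θ : Fin (k + 1) → ℝ, ∀ x : ℝ, -1 ≤ x → x ≤ 1 →
      qspZ (θ 0) * (List.ofFn fun j : Fin k => qspW x * qspZ (θ j.succ)).prod =
        !![P.eval (x : ℂ), Complex.I * Q.eval (x : ℂ) * Real.sqrt (1 - x ^ 2);
           Complex.I * (starRingEnd ℂ) (Q.eval (x : ℂ)) * Real.sqrt (1 - x ^ 2),
           (starRingEnd ℂ) (P.eval (x : ℂ))] := by
  have hP' : P ∈ parityDegreeLE ℂ k := mem_parityDegreeLE.2 fun n hn => by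
    have hn_le : n ≤ k := by exact_mod_cast (le_degree_of_ne_zero hn).trans hP
    have := hPpar n hn
    omega
  have hQ' : Q ∈ parityDegreeLE ℂ (k - 1) := mem_parityDegreeLE.2 fun n hn => by
    have hn_lt : n < k := by exact_mod_cast (le_degree_of_ne_zero hn).trans_lt hQ
    have := hQpar n hn
    omega
  exact exists_qspProduct_eq_qspBlock k hP' hQ' (isQSPPair_of_norm_sq hnorm)
end

section
/- Let H : ℝ → Matrix n n ℂ be continuous and suppose H commutes with itself at different times, i.e. H(s) · H(s') = H(s') · H(s) for all real s, s'. Define U(t) := exp(−i · ∫_0^t H(s) ds), where exp is the matrix exponential. Then U solves the Schrödinger equation: for every real t, the map U has derivative at t equal to (−i) • (H(t) · U(t)), i.e. HasDerivAt U ((−i) • (H(t) · U(t))) t. In particular, for Hamiltonians commuting at different times the time-ordered exponential coincides with the ordinary exponential of the integral. -/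
/-!
Since the values of `H` commute, so do the integrals `A u = -i ∫₀ᵘ H`; hence
`exp (A u) = exp (A u - A t) * exp (A t)`, and because `exp` has derivative the identity at `0`,
the first factor has derivative `A'(t) = -i H(t)` at `u = t`.
-/

open NormedSpace

attribute [local instance] Matrix.normedAddCommGroup Matrix.normedSpace

theorem hasDerivAt_exp_of_commute {𝕂 𝔸 : Type*} [RCLike 𝕂] [NormedRing 𝔸] [NormedAlgebra 𝕂 𝔸]
    [CompleteSpace 𝔸] {A : 𝕂 → 𝔸} {A' : 𝔸} {t : 𝕂} (hA : HasDerivAt A A' t)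
    (hcomm : ∀ u, Commute (A u) (A t)) :
    HasDerivAt (fun u => exp (A u)) (A' * exp (A t)) t := by
  let _ : NormedAlgebra ℚ 𝔸 := .restrictScalars ℚ 𝕂 𝔸
  have hshift : HasDerivAt (fun u => exp (A u - A t)) A' t := by
    have hexp : HasFDerivAt exp (1 : 𝔸 →L[𝕂] 𝔸) (A t - A t) := by
      rw [sub_self]
      exact hasFDerivAt_exp_zero
    exact hexp.comp_hasDerivAt t (hA.sub_const (A t))
  have hsplit : ∀ u, exp (A u - A t) * exp (A t) = exp (A u) := fun u => by
    rw [← exp_add_of_commute ((hcomm u).sub_left (Commute.refl _)), sub_add_cancel]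
  simpa only [hsplit] using hshift.mul_const (exp (A t))

namespace Matrix

variable {n 𝕜 : Type*} [Fintype n] [RCLike 𝕜]

/- The entrywise sup norm is not submultiplicative, so we pass to the `L∞`-operator norm; it
induces the same topology, on which alone `HasDerivAt` and `exp` depend. -/
theorem hasDerivAt_exp_of_commute [DecidableEq n] {A : ℝ → Matrix n n 𝕜} {A' : Matrix n n 𝕜}
    {t : ℝ} (hA : HasDerivAt A A' t) (hcomm : ∀ u, Commute (A u) (A t)) :
    HasDerivAt (fun u => exp (A u)) (A' * exp (A t)) t := by
  let _ := Matrix.linftyOpNormedRing (n := n) (α := 𝕜)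
  let _ := Matrix.linftyOpNormedAlgebra (n := n) (R := ℝ) (α := 𝕜)
  have hcomplete : CompleteSpace (Matrix n n 𝕜) := FiniteDimensional.complete ℝ _
  exact @_root_.hasDerivAt_exp_of_commute ℝ _ _ _ _ hcomplete A A' t hA hcomm

theorem commute_intervalIntegral_right {c : Matrix n n 𝕜} {f : ℝ → Matrix n n 𝕜}
    (hf : Continuous f) (h : ∀ s, Commute c (f s)) (a b : ℝ) :
    Commute c (∫ s in a..b, f s) := by
  let mulLeftL : Matrix n n 𝕜 →L[ℝ] Matrix n n 𝕜 :=
    ⟨LinearMap.mulLeft ℝ c, continuous_const.matrix_mul continuous_id⟩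
  let mulRightL : Matrix n n 𝕜 →L[ℝ] Matrix n n 𝕜 :=
    ⟨LinearMap.mulRight ℝ c, continuous_id.matrix_mul continuous_const⟩
  calc c * ∫ s in a..b, f s = ∫ s in a..b, mulLeftL (f s) :=
        (mulLeftL.intervalIntegral_comp_comm (hf.intervalIntegrable a b)).symm
    _ = ∫ s in a..b, mulRightL (f s) := intervalIntegral.integral_congr fun s _ => h s
    _ = (∫ s in a..b, f s) * c := mulRightL.intervalIntegral_comp_comm (hf.intervalIntegrable a b)

theorem commute_intervalIntegral {f g : ℝ → Matrix n n 𝕜} (hf : Continuous f) (hg : Continuous g)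
    (h : ∀ s s', Commute (f s) (g s')) (a b c d : ℝ) :
    Commute (∫ s in a..b, f s) (∫ s in c..d, g s) :=
  commute_intervalIntegral_right hg (fun s' =>
    (commute_intervalIntegral_right hf (fun s => (h s s').symm) a b).symm) c d

end Matrix

/-- For a continuous time-dependent Hamiltonian commuting with itself at different times,
`U(t) = exp(-i ∫_0^t H(s) ds)` solves the Schrödinger equation
`∂U(t)/∂t = -i H(t) U(t)`. -/
theorem exp_neg_I_integral_hasDerivAt
    {n : Type*} [Fintype n] [DecidableEq n]
    (H : ℝ → Matrix n n ℂ) (hcont : Continuous H)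
    (hcomm : ∀ s s' : ℝ, H s * H s' = H s' * H s) :
    ∀ t : ℝ,
      HasDerivAt (fun t : ℝ => exp ((-Complex.I) • ∫ s in (0 : ℝ)..t, H s))
        ((-Complex.I) • (H t * exp ((-Complex.I) • ∫ s in (0 : ℝ)..t, H s))) t := by
  intro t
  have hint : HasDerivAt (fun u => (-Complex.I) • ∫ s in (0 : ℝ)..u, H s)
      ((-Complex.I) • H t) t :=
    (hcont.integral_hasStrictDerivAt 0 t).hasDerivAt.const_smul (-Complex.I)
  have hexp := Matrix.hasDerivAt_exp_of_commute hint fun u =>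
    ((Matrix.commute_intervalIntegral hcont hcont hcomm 0 u 0 t).smul_left _).smul_right _
  simpa only [Matrix.smul_mul] using hexp
end

section
/- There exists a constant c > 0 with the following property (polynomial approximation of the rectangle function): for all δ, ε ∈ (0, 1/2) and all t ∈ (δ, 1 − δ], there exists an even real polynomial P of degree at most c · (1/δ) · log(1/ε) such that |P(x)| ≤ 1 for all x ∈ [−1, 1], P(x) ∈ [0, ε] for all x ∈ [−1, −t − δ] ∪ [t + δ, 1], and P(x) ∈ [1 − ε, 1] for all x ∈ [−t + δ, t − δ]. -/
open Polynomial Real Polynomial.Chebyshev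

namespace RectAux



lemma coeff_comp_neg_X (p : ℝ[X]) (n : ℕ) :
    (p.comp (-X)).coeff n = (-1) ^ n * p.coeff n := by
  induction p using Polynomial.induction_on' with
  | add f g hf hg => simp [add_comp, hf, hg, mul_add]
  | monomial k a =>
    have h1 : ((-1 : ℝ[X])) ^ k = C ((-1 : ℝ) ^ k) := by
      rw [← Polynomial.C_1, ← Polynomial.C_neg, ← Polynomial.C_pow]
    rw [monomial_comp, neg_pow, h1, ← mul_assoc, ← Polynomial.C_mul, coeff_C_mul, coeff_X_pow,
      coeff_monomial]
    rcases eq_or_ne n k with rfl | hnk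
    · simp [mul_comm]
    · simp [hnk, Ne.symm hnk]

lemma even_coeff_of_eval_even {p : ℝ[X]} (h : ∀ x : ℝ, p.eval (-x) = p.eval x) :
    ∀ n : ℕ, p.coeff n ≠ 0 → Even n := by
  intro n hn
  have hcomp : p.comp (-X) = p := by
    apply Polynomial.funext
    intro r
    rw [eval_comp]
    simp [h r]
  by_contra hodd
  rw [Nat.not_even_iff_odd] at hodd
  have := coeff_comp_neg_X p n
  rw [hcomp, hodd.neg_one_pow] at this
  apply hn
  linarith

noncomputable def antider (p : ℝ[X]) : ℝ[X] := p.sum fun n a => C (a / (n + 1)) * X ^ (n + 1)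

lemma derivative_antider (p : ℝ[X]) : (antider p).derivative = p := by
  unfold antider Polynomial.sum
  rw [derivative_sum]
  conv_rhs => rw [← p.sum_C_mul_X_pow_eq]
  unfold Polynomial.sum
  apply Finset.sum_congr rfl
  intro n _
  rw [derivative_C_mul, derivative_X_pow]
  push_cast
  rw [← mul_assoc, ← Polynomial.C_mul]
  congr 2
  have hne : (n : ℝ) + 1 ≠ 0 := by positivity
  field_simp

lemma antider_eval_zero (p : ℝ[X]) : (antider p).eval 0 = 0 := by
  unfold antider Polynomial.sum
  rw [eval_finset_sum]
  apply Finset.sum_eq_zero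
  intro n _
  simp [pow_succ]

lemma natDegree_antider_le (p : ℝ[X]) : (antider p).natDegree ≤ p.natDegree + 1 := by
  unfold antider Polynomial.sum
  apply Polynomial.natDegree_sum_le_of_forall_le
  intro n hn
  calc (C (p.coeff n / (n + 1)) * X ^ (n + 1)).natDegree
      ≤ (X ^ (n+1) : ℝ[X]).natDegree := natDegree_C_mul_le _ _
    _ ≤ n + 1 := by simp
    _ ≤ p.natDegree + 1 := by
        have := Polynomial.le_natDegree_of_mem_supp n hn
        omega

lemma antider_eval_neg {p : ℝ[X]} (hp : ∀ n : ℕ, p.coeff n ≠ 0 → Even n) (x : ℝ) :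
    (antider p).eval (-x) = -(antider p).eval x := by
  unfold antider Polynomial.sum
  rw [eval_finset_sum, eval_finset_sum, ← Finset.sum_neg_distrib]
  apply Finset.sum_congr rfl
  intro n hn
  have he : Even n := hp n (Polynomial.mem_support_iff.1 hn)
  have : (-x) ^ (n + 1) = -(x ^ (n + 1)) := by
    have h2 : (-1 : ℝ) ^ (n + 1) = -1 := by
      rw [pow_succ, Even.neg_one_pow he]
      ring
    rw [neg_pow, h2]
    ring
  simp [this]





lemma poly_monotone {p : ℝ[X]} (h : ∀ x : ℝ, 0 ≤ p.derivative.eval x) :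
    Monotone (fun x : ℝ => p.eval x) := by
  apply monotone_of_deriv_nonneg
  · exact fun x => (p.hasDerivAt x).differentiableAt
  · intro x
    rw [Polynomial.deriv (p := p)]
    exact h x

/-- If `p' ≤ M` on `(a,b)` then `p b - p a ≤ M (b - a)`. -/
lemma eval_sub_le_of_deriv_le {p : ℝ[X]} {a b M : ℝ} (hab : a ≤ b)
    (h : ∀ x ∈ Set.Ioo a b, p.derivative.eval x ≤ M) :
    p.eval b - p.eval a ≤ M * (b - a) := by
  have hm : MonotoneOn (fun x : ℝ => M * x - p.eval x) (Set.Icc a b) := by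
    apply monotoneOn_of_deriv_nonneg (convex_Icc a b)
    · exact ((continuous_const.mul continuous_id).sub p.continuous).continuousOn
    · intro x _
      exact (((hasDerivAt_id x).const_mul M).sub (p.hasDerivAt x)).differentiableAt.differentiableWithinAt
    · intro x hx
      rw [interior_Icc] at hx
      have hd : HasDerivAt (fun x : ℝ => M * x - p.eval x) (M * 1 - p.derivative.eval x) x :=
        ((hasDerivAt_id x).const_mul M).sub (p.hasDerivAt x)
      rw [hd.deriv]
      have := h x hx
      linarith
  have := hm (Set.left_mem_Icc.2 hab) (Set.right_mem_Icc.2 hab) hab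
  simp only at this
  linarith

/-- If `M ≤ p'` on `(a,b)` then `M (b - a) ≤ p b - p a`. -/
lemma le_eval_sub_of_le_deriv {p : ℝ[X]} {a b M : ℝ} (hab : a ≤ b)
    (h : ∀ x ∈ Set.Ioo a b, M ≤ p.derivative.eval x) :
    M * (b - a) ≤ p.eval b - p.eval a := by
  have hm : MonotoneOn (fun x : ℝ => p.eval x - M * x) (Set.Icc a b) := by
    apply monotoneOn_of_deriv_nonneg (convex_Icc a b)
    · exact (p.continuous.sub (continuous_const.mul continuous_id)).continuousOn
    · intro x _
      exact ((p.hasDerivAt x).sub ((hasDerivAt_id x).const_mul M)).differentiableAt.differentiableWithinAt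
    · intro x hx
      rw [interior_Icc] at hx
      have hd : HasDerivAt (fun x : ℝ => p.eval x - M * x) (p.derivative.eval x - M * 1) x :=
        (p.hasDerivAt x).sub ((hasDerivAt_id x).const_mul M)
      rw [hd.deriv]
      have := h x hx
      linarith
  have := hm (Set.left_mem_Icc.2 hab) (Set.right_mem_Icc.2 hab) hab
  simp only at this
  linarith

/-- Tail bound: if `p'(u) u² ≤ 1` on `(d,b)` with `0 < d ≤ b`, then `p b - p d ≤ 1/d`. -/
lemma tail_bound {p : ℝ[X]} {d b : ℝ} (hd : 0 < d) (hdb : d ≤ b)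
    (h : ∀ u ∈ Set.Ioo d b, p.derivative.eval u * u ^ 2 ≤ 1) :
    p.eval b - p.eval d ≤ 1 / d := by
  have hm : MonotoneOn (fun u : ℝ => -u⁻¹ - p.eval u) (Set.Icc d b) := by
    apply monotoneOn_of_deriv_nonneg (convex_Icc d b)
    · apply ContinuousOn.sub
      · apply ContinuousOn.neg
        apply ContinuousOn.inv₀ continuousOn_id
        intro x hx
        exact ne_of_gt (lt_of_lt_of_le hd hx.1)
      · exact p.continuous.continuousOn
    · intro x hx
      rw [interior_Icc] at hx
      have hx0 : x ≠ 0 := ne_of_gt (lt_trans hd hx.1)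
      exact (((hasDerivAt_inv hx0).neg).sub (p.hasDerivAt x)).differentiableAt.differentiableWithinAt
    · intro x hx
      rw [interior_Icc] at hx
      have hx0 : (0:ℝ) < x := lt_trans hd hx.1
      have hd2 : HasDerivAt (fun u : ℝ => -u⁻¹ - p.eval u) (-(-(x^2)⁻¹) - p.derivative.eval x) x :=
        ((hasDerivAt_inv (ne_of_gt hx0)).neg).sub (p.hasDerivAt x)
      rw [hd2.deriv]
      have h1 := h x hx
      have hx2 : (0:ℝ) < x ^ 2 := by positivity
      rw [sub_nonneg, neg_neg]
      have h1' : p.derivative.eval x ≤ 1 / x ^ 2 := (le_div_iff₀ hx2).2 h1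
      rw [one_div] at h1'
      exact h1'
  have := hm (Set.left_mem_Icc.2 hdb) (Set.right_mem_Icc.2 hdb) hdb
  simp only at this
  have hb0 : (0:ℝ) < b := lt_of_lt_of_le hd hdb
  have h2 : (0:ℝ) < b⁻¹ := by positivity
  have h3 : p.eval b - p.eval d ≤ d⁻¹ - b⁻¹ := by linarith
  rw [one_div]
  linarith





lemma natDegree_T_le : ∀ n : ℕ, (Chebyshev.T ℝ (n : ℤ)).natDegree ≤ n := by
  intro n
  induction n using Nat.strong_induction_on with
  | _ n ih =>
    match n with
    | 0 => simp [Chebyshev.T_zero]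
    | 1 => simp [Chebyshev.T_one]
    | (k+2) =>
      have hcast : ((k+2 : ℕ) : ℤ) = (k : ℤ) + 2 := by push_cast; ring
      rw [hcast, Chebyshev.T_add_two]
      apply le_trans (natDegree_sub_le _ _)
      have h1 : (2 * X * Chebyshev.T ℝ ((k:ℤ) + 1)).natDegree ≤ k + 2 := by
        apply le_trans (natDegree_mul_le)
        have h2 : (2 * X : ℝ[X]).natDegree ≤ 1 := by
          apply le_trans (natDegree_mul_le)
          simp
        have h3 : (Chebyshev.T ℝ ((k:ℤ) + 1)).natDegree ≤ k + 1 := by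
          have := ih (k+1) (by omega)
          rwa [show ((k+1 : ℕ) : ℤ) = (k:ℤ)+1 by push_cast; ring] at this
        omega
      have h4 : (Chebyshev.T ℝ (k:ℤ)).natDegree ≤ k := ih k (by omega)
      omega

lemma T_eval_abs_le (n : ℤ) {x : ℝ} (hx : x ∈ Set.Icc (-1:ℝ) 1) :
    |(Chebyshev.T ℝ n).eval x| ≤ 1 := by
  have : x = Real.cos (Real.arccos x) := (Real.cos_arccos hx.1 hx.2).symm
  rw [this, Chebyshev.T_real_cos]
  exact Real.abs_cos_le_one _

lemma cos_odd_mul_pi_sub (k : ℕ) (θ : ℝ) :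
    Real.cos ((2*(k:ℝ)+1) * (π - θ)) = -Real.cos ((2*(k:ℝ)+1) * θ) := by
  have h1 : (2*(k:ℝ)+1) * (π - θ) = (π + -((2*(k:ℝ)+1) * θ)) + k * (2*π) := by ring
  rw [h1, Real.cos_add_nat_mul_two_pi, Real.cos_add]
  simp

lemma cos_odd_mul_pi_div_two_sub (k : ℕ) (θ : ℝ) :
    (Real.cos ((2*(k:ℝ)+1) * (π/2 - θ))) ^ 2 = (Real.sin ((2*(k:ℝ)+1) * θ)) ^ 2 := by
  have h1 : (2*(k:ℝ)+1) * (π/2 - θ) = (π/2 + -((2*(k:ℝ)+1) * θ)) + k * π := by ring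
  rw [h1]
  rcases Nat.even_or_odd k with he | ho
  · obtain ⟨c, hc⟩ := he
    have : ((k:ℝ)) * π = (c:ℝ) * (2*π) := by rw [hc]; push_cast; ring
    rw [this, Real.cos_add_nat_mul_two_pi, Real.cos_add]
    simp [Real.cos_pi_div_two, Real.sin_pi_div_two]
  · obtain ⟨c, hc⟩ := ho
    have : (π/2 + -((2*(k:ℝ)+1) * θ)) + (k:ℝ) * π = ((π/2 + -((2*(k:ℝ)+1) * θ)) + π) + c * (2*π) := by
      rw [hc]; push_cast; ring
    rw [this, Real.cos_add_nat_mul_two_pi,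
      show π/2 + -((2*(k:ℝ)+1) * θ) + π = π + (π/2 + -((2*(k:ℝ)+1) * θ)) by ring,
      Real.cos_add π, Real.cos_add]
    simp [Real.cos_pi_div_two, Real.sin_pi_div_two]

lemma T_comp_neg_X (k : ℕ) :
    (Chebyshev.T ℝ ((2*k+1 : ℕ) : ℤ)).comp (-X) = -(Chebyshev.T ℝ ((2*k+1 : ℕ) : ℤ)) := by
  apply Polynomial.eq_of_infinite_eval_eq
  apply Set.Infinite.mono (s := Set.Icc (-1:ℝ) 1)
  swap
  · exact Set.Icc_infinite (by norm_num)
  intro x hx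
  simp only [Set.mem_setOf_eq, eval_comp, eval_neg, eval_X]
  have hx' : -x = Real.cos (π - Real.arccos x) := by
    rw [Real.cos_pi_sub, Real.cos_arccos hx.1 hx.2]
  rw [hx', Chebyshev.T_real_cos]
  have hx2 : x = Real.cos (Real.arccos x) := (Real.cos_arccos hx.1 hx.2).symm
  nth_rewrite 2 [hx2]
  rw [Chebyshev.T_real_cos]
  set θ := Real.arccos x
  push_cast
  exact cos_odd_mul_pi_sub k θ

lemma T_eval_neg (k : ℕ) (x : ℝ) :
    (Chebyshev.T ℝ ((2*k+1 : ℕ) : ℤ)).eval (-x) = -(Chebyshev.T ℝ ((2*k+1 : ℕ) : ℤ)).eval x := by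
  have := congrArg (fun p => Polynomial.eval x p) (T_comp_neg_X k)
  simpa [eval_comp] using this

lemma T_eval_sin_sq (k : ℕ) (φ : ℝ) :
    ((Chebyshev.T ℝ ((2*k+1 : ℕ) : ℤ)).eval (Real.sin φ)) ^ 2
      = (Real.sin ((2*(k:ℝ)+1) * φ)) ^ 2 := by
  have h1 : Real.sin φ = Real.cos (π/2 - φ) := (Real.cos_pi_div_two_sub φ).symm
  rw [h1, Chebyshev.T_real_cos]
  push_cast
  exact cos_odd_mul_pi_div_two_sub k φ







lemma nat_le_exp_half (m : ℕ) : (m:ℝ) ≤ Real.exp ((m:ℝ)/2) := by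
  have h3 := Real.sum_le_exp_of_nonneg (x := (m:ℝ)/2) (by positivity) 3
  simp [Finset.sum_range_succ] at h3
  nlinarith [h3]

lemma const_le_exp_neg_three_half : (49/256:ℝ) ≤ Real.exp (-(3/2)) := by
  have he1 : Real.exp 1 < 2.7182818286 := Real.exp_one_lt_d9
  have hpos : (0:ℝ) < Real.exp (3/2) := Real.exp_pos _
  have hsq : Real.exp (3/2) * Real.exp (3/2) = Real.exp 3 := by
    rw [← Real.exp_add]; norm_num
  have he3 : Real.exp 3 = (Real.exp 1)^3 := by
    rw [show (3:ℝ) = ((3:ℕ):ℝ)*1 by norm_num, Real.exp_nat_mul]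
  have h20 : Real.exp 3 < 20.1 := by
    rw [he3]
    have h2 : Real.exp 1^3 < 2.7182818286^3 :=
      pow_lt_pow_left₀ he1 (Real.exp_pos 1).le (by norm_num)
    have h3 : (2.7182818286:ℝ)^3 < 20.1 := by norm_num
    linarith
  have hsqrt : Real.exp (3/2) ≤ 256/49 := by nlinarith
  have h := inv_anti₀ hpos hsqrt
  rw [← Real.exp_neg] at h
  calc (49/256:ℝ) = (256/49:ℝ)⁻¹ := by norm_num
    _ ≤ Real.exp (-(3/2)) := h

section Main

variable {δ ε t : ℝ}

set_option maxHeartbeats 4000000 in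
/-- Main construction -/
lemma construction (hδ0 : 0 < δ) (hδ2 : δ < 1/2) (hε0 : 0 < ε) (hε2 : ε < 1/2)
    (htδ : δ < t) (ht1 : t ≤ 1 - δ) :
    ∃ P : Polynomial ℝ,
      (∀ n : ℕ, P.coeff n ≠ 0 → Even n) ∧
      (P.natDegree : ℝ) ≤ 2000 * (1 / δ) * Real.log (1 / ε) ∧
      (∀ x ∈ Set.Icc (-1 : ℝ) 1, |P.eval x| ≤ 1) ∧
      (∀ x ∈ Set.Icc (-1 : ℝ) (-t - δ) ∪ Set.Icc (t + δ) 1,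
        P.eval x ∈ Set.Icc (0 : ℝ) ε) ∧
      (∀ x ∈ Set.Icc (-t + δ) (t - δ), P.eval x ∈ Set.Icc (1 - ε) 1) := by
  -- basic numbers
  set L : ℝ := Real.log (1 / ε) with hLdef
  have hL_log2 : Real.log 2 ≤ L := by
    apply Real.log_le_log (by norm_num)
    rw [le_one_div (by norm_num) hε0]
    linarith
  have hL0 : (0.69 : ℝ) < L := lt_of_lt_of_le (by linarith [Real.log_two_gt_d9]) hL_log2
  -- parameters
  set k₁ : ℕ := ⌈(20:ℝ)/δ⌉₊ with hk₁def
  set N : ℕ := 2 * k₁ + 1 with hNdef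
  set m : ℕ := ⌈L⌉₊ with hmdef
  have hm1 : 1 ≤ m := Nat.one_le_ceil_iff.2 (by linarith)
  have hmL : L ≤ m := Nat.le_ceil L
  have hmle : (m:ℝ) ≤ L + 1 := le_of_lt (Nat.ceil_lt_add_one (by linarith))
  have hk₁ge : (20:ℝ)/δ ≤ k₁ := Nat.le_ceil _
  have hk₁le : (k₁:ℝ) ≤ 20/δ + 1 := le_of_lt (Nat.ceil_lt_add_one (by positivity))
  have hN40 : (40:ℝ)/δ ≤ (N:ℝ) := by
    have : ((N:ℝ)) = 2 * (k₁:ℝ) + 1 := by rw [hNdef]; push_cast; ring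
    rw [this]
    have : (40:ℝ)/δ = 2 * ((20:ℝ)/δ) := by ring
    linarith
  have hNle : (N:ℝ) ≤ 46/δ := by
    have h1 : ((N:ℝ)) = 2 * (k₁:ℝ) + 1 := by rw [hNdef]; push_cast; ring
    have h3 : (3:ℝ) ≤ 6/δ := by
      rw [le_div_iff₀ hδ0]; linarith
    rw [h1]
    have h40 : (40:ℝ)/δ = 2 * (20/δ) := by ring
    have : 2 * (k₁:ℝ) + 1 ≤ 40/δ + 3 := by linarith
    calc 2 * (k₁:ℝ) + 1 ≤ 40/δ + 3 := this
      _ ≤ 40/δ + 6/δ := by linarith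
      _ = 46/δ := by ring
  have hN1 : (1:ℝ) ≤ (N:ℝ) := by
    have h40 : (2:ℝ) ≤ 40/δ := by
      rw [le_div_iff₀ hδ0]; linarith
    linarith
  have hNpos : (0:ℝ) < N := by linarith
  have hπ : π < 3.1416 := Real.pi_lt_d4
  have hπ0 : 0 < π := Real.pi_pos
  have hπsq : π^2 < 9.87 := by nlinarith
  -- the kernel polynomial
  set Tp : ℝ[X] := Chebyshev.T ℝ ((N:ℕ) : ℤ) with hTpdef
  set pT : ℝ[X] := Tp.comp (C (1/2 : ℝ) * X) with hpTdef
  have hTsin : ∀ φ : ℝ, (Tp.eval (Real.sin φ))^2 = (Real.sin ((N:ℝ) * φ))^2 := by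
    intro φ
    have := T_eval_sin_sq k₁ φ
    rw [hTpdef, hNdef]
    convert this using 3 <;> push_cast <;> ring
  have hTneg : ∀ x : ℝ, Tp.eval (-x) = -Tp.eval x := fun x => T_eval_neg k₁ x
  have hTabs : ∀ x : ℝ, -1 ≤ x → x ≤ 1 → (Tp.eval x)^2 ≤ 1 := by
    intro x h1 h2
    have := T_eval_abs_le ((N:ℕ):ℤ) (Set.mem_Icc.2 ⟨h1, h2⟩)
    calc (Tp.eval x)^2 = |Tp.eval x|^2 := (sq_abs _).symm
      _ ≤ 1^2 := by
          apply pow_le_pow_left₀ (abs_nonneg _)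
          exact this
      _ = 1 := one_pow 2
  have hpT0 : pT.coeff 0 = 0 := by
    rw [Polynomial.coeff_zero_eq_eval_zero, hpTdef, eval_comp]
    simp only [eval_mul, eval_C, eval_X, mul_zero]
    have h := hTsin 0
    norm_num at h
    exact h
  obtain ⟨g, hg⟩ : (X : ℝ[X]) ∣ pT := Polynomial.X_dvd_iff.2 hpT0
  set w : ℝ[X] := g^2 with hwdef
  have hgeval : ∀ u : ℝ, Tp.eval (u/2) = u * g.eval u := by
    intro u
    have := congrArg (fun p : ℝ[X] => p.eval u) hg
    simp only [eval_comp, eval_mul, eval_C, eval_X, hpTdef] at this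
    rw [show (1:ℝ)/2 * u = u/2 by ring] at this
    exact this
  have hE : ∀ u : ℝ, u^2 * w.eval u = (Tp.eval (u/2))^2 := by
    intro u
    rw [hgeval u, hwdef, eval_pow]
    ring
  have hw0 : ∀ u : ℝ, 0 ≤ w.eval u := by
    intro u
    rw [hwdef, eval_pow]
    exact sq_nonneg _
  have hweven : ∀ u : ℝ, w.eval (-u) = w.eval u := by
    intro u
    rcases eq_or_ne u 0 with rfl | hu
    · norm_num
    · have h1 := hE u
      have h2 := hE (-u)
      rw [show (-u)/2 = -(u/2) by ring, hTneg, neg_sq, neg_sq] at h2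
      have hu2 : u^2 ≠ 0 := pow_ne_zero 2 hu
      exact mul_left_cancel₀ hu2 (h2.trans h1.symm)
  -- W = ∫ w, C₀ = W(2)
  set W : ℝ[X] := antider w with hWdef
  have hW' : W.derivative = w := derivative_antider w
  have hWmono : Monotone (fun x : ℝ => W.eval x) := poly_monotone (by rw [hW']; exact hw0)
  have hW0 : W.eval 0 = 0 := antider_eval_zero w
  have hWodd : ∀ x : ℝ, W.eval (-x) = -W.eval x := by
    intro x
    exact antider_eval_neg (even_coeff_of_eval_even hweven) x
  set C₀ : ℝ := W.eval 2 with hC₀def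
  -- central bound
  have hcentral : (N:ℝ)/π^2 ≤ W.eval (1/(N:ℝ)) := by
    have hkey : (N:ℝ)^2/π^2 * (1/(N:ℝ) - 0) ≤ W.eval (1/(N:ℝ)) - W.eval 0 := by
      apply le_eval_sub_of_le_deriv (by positivity)
      intro u hu
      obtain ⟨hu0, hu1⟩ := hu
      rw [hW']
      have hNinv1 : 1/(N:ℝ) ≤ 1 := by rw [div_le_one hNpos]; exact hN1
      have hu1' : u < 1 := lt_of_lt_of_le hu1 hNinv1
      set φ := Real.arcsin (u/2) with hφdef
      have hsinφ : Real.sin φ = u/2 := Real.sin_arcsin (by linarith) (by linarith)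
      have hφ0 : 0 ≤ φ := Real.arcsin_nonneg.2 (by linarith)
      have hφπ2 : φ ≤ π/2 := Real.arcsin_le_pi_div_two _
      have hJφ : 2/π * φ ≤ u/2 := by rw [← hsinφ]; exact Real.mul_le_sin hφ0 hφπ2
      have hφle : φ ≤ π*u/4 := by
        have hmul := mul_le_mul_of_nonneg_left hJφ hπ0.le
        have hππ : π * (2/π * φ) = 2*φ := by field_simp
        rw [hππ] at hmul
        linarith
      have hNu : (N:ℝ) * u ≤ 1 := by
        calc (N:ℝ)*u ≤ (N:ℝ)*(1/(N:ℝ)) :=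
              mul_le_mul_of_nonneg_left (le_of_lt hu1) (le_of_lt hNpos)
          _ = 1 := mul_one_div_cancel (ne_of_gt hNpos)
      have hNφ2 : (N:ℝ)*φ ≤ π/2 := by
        have h1 : (N:ℝ)*φ ≤ (N:ℝ)*(π*u/4) := mul_le_mul_of_nonneg_left hφle (le_of_lt hNpos)
        have h2 : (N:ℝ)*(π*u/4) = ((N:ℝ)*u) * π/4 := by ring
        rw [h2] at h1
        nlinarith [hπ0]
      have hNφ0 : 0 ≤ (N:ℝ)*φ := by positivity
      have hφu : u/2 ≤ φ := by
        have := Real.sin_le hφ0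
        linarith [hsinφ ▸ this]
      have hsinNφ : (N:ℝ)*u/π ≤ Real.sin ((N:ℝ)*φ) := by
        have hJ := Real.mul_le_sin hNφ0 hNφ2
        have : (N:ℝ)*u/π = 2/π * ((N:ℝ) * (u/2)) := by ring
        rw [this]
        refine le_trans ?_ hJ
        have h2π : (0:ℝ) ≤ 2/π := by positivity
        have : (N:ℝ) * (u/2) ≤ (N:ℝ) * φ := mul_le_mul_of_nonneg_left hφu (le_of_lt hNpos)
        nlinarith
      have hEu := hE u
      rw [show u/2 = Real.sin φ from hsinφ.symm, hTsin φ] at hEu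
      have hsq : ((N:ℝ)*u/π)^2 ≤ (Real.sin ((N:ℝ)*φ))^2 := by
        apply pow_le_pow_left₀ (by positivity) hsinNφ
      have hfin : u^2 * ((N:ℝ)^2/π^2) ≤ u^2 * w.eval u := by
        calc u^2 * ((N:ℝ)^2/π^2) = ((N:ℝ)*u/π)^2 := by
              field_simp
          _ ≤ (Real.sin ((N:ℝ)*φ))^2 := hsq
          _ = u^2 * w.eval u := hEu.symm
      have hu2pos : (0:ℝ) < u^2 := by positivity
      exact le_of_mul_le_mul_left hfin hu2pos
    rw [hW0] at hkey
    simp only [sub_zero] at hkey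
    refine le_trans (le_of_eq ?_) hkey
    field_simp
  have hC₀ : (N:ℝ)/π^2 ≤ C₀ := by
    refine le_trans hcentral ?_
    apply hWmono
    calc (1:ℝ)/(N:ℝ) ≤ 1 := by
          rw [div_le_one hNpos]; exact hN1
      _ ≤ 2 := by norm_num
  have hC₀pos : 0 < C₀ := lt_of_lt_of_le (by positivity) hC₀
  have hC₀4 : 4/δ ≤ C₀ := by
    refine le_trans ?_ hC₀
    rw [div_le_div_iff₀ hδ0 (by positivity)]
    calc 4 * π^2 ≤ 4 * 9.87 := by nlinarith
      _ ≤ (40/δ) * δ := by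
          rw [div_mul_cancel₀]
          · norm_num
          · exact ne_of_gt hδ0
      _ ≤ (N:ℝ) * δ := by
          apply mul_le_mul_of_nonneg_right hN40 (le_of_lt hδ0)
  -- tail bound
  have htail : ∀ u : ℝ, δ ≤ u → u ≤ 2 → C₀ - W.eval u ≤ 1/u := by
    intro u hu1 hu2
    have hu0 : 0 < u := lt_of_lt_of_le hδ0 hu1
    have hb := tail_bound (p := W) hu0 hu2 ?_
    · linarith [hb]
    · intro z hz
      rw [hW']
      have hz0 : 0 < z := lt_trans hu0 hz.1
      have hz2 : z < 2 := hz.2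
      have h1 := hE z
      have h2 : (Tp.eval (z/2))^2 ≤ 1 := hTabs _ (by linarith) (by linarith)
      rw [mul_comm]
      linarith
  -- amplifier
  set v : ℝ[X] := (1 - X^2)^(2*m) with hvdef
  have hv_eval : ∀ z : ℝ, v.eval z = (1 - z^2)^(2*m) := by
    intro z; rw [hvdef]; simp
  have hv0 : ∀ z : ℝ, 0 ≤ v.eval z := by
    intro z
    rw [hv_eval, mul_comm 2 m, pow_mul]
    positivity
  set V : ℝ[X] := antider v with hVdef
  have hV' : V.derivative = v := derivative_antider v
  have hVmono : Monotone (fun x : ℝ => V.eval x) := poly_monotone (by rw [hV']; exact hv0)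
  have hV0 : V.eval 0 = 0 := antider_eval_zero v
  have hVodd : ∀ x : ℝ, V.eval (-x) = -V.eval x := by
    intro x
    apply antider_eval_neg (even_coeff_of_eval_even ?_) x
    intro z
    rw [hv_eval, hv_eval, neg_sq]
  set V₁ : ℝ := V.eval 1 with hV₁def
  have hm0 : (0:ℝ) < m := by exact_mod_cast hm1
  have hm1' : (1:ℝ) ≤ (m:ℝ) := by exact_mod_cast hm1
  have hV₁low : 1/(4*(m:ℝ)) ≤ V₁ := by
    have hstep : (1:ℝ)/2 * (1/(2*(m:ℝ)) - 0) ≤ V.eval (1/(2*(m:ℝ))) - V.eval 0 := by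
      apply le_eval_sub_of_le_deriv (by positivity)
      intro z hz
      obtain ⟨hz0, hz1⟩ := hz
      rw [hV', hv_eval]
      have hz12 : z ≤ 1/2 := by
        have h2m : (2:ℝ) ≤ 2*(m:ℝ) := by linarith
        have : (1:ℝ)/(2*(m:ℝ)) ≤ 1/2 := one_div_le_one_div_of_le (by norm_num) h2m
        linarith
      have hbern := one_add_mul_le_pow (a := -z^2) (n := 2*m)
        (by nlinarith [mul_le_mul_of_nonneg_left hz12 hz0.le])
      have hz2 : z^2 ≤ 1/(4*(m:ℝ)^2) := by
        have hle : z ≤ 1/(2*(m:ℝ)) := le_of_lt hz1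
        have h1 : z^2 ≤ (1/(2*(m:ℝ)))^2 := pow_le_pow_left₀ hz0.le hle 2
        calc z^2 ≤ (1/(2*(m:ℝ)))^2 := h1
          _ = 1/(4*(m:ℝ)^2) := by
              rw [div_pow]
              congr 1
              · norm_num
              · ring
      have hmz : 2*(m:ℝ)*z^2 ≤ 1/(2*(m:ℝ)) := by
        have := mul_le_mul_of_nonneg_left hz2 (show (0:ℝ) ≤ 2*(m:ℝ) by positivity)
        calc 2*(m:ℝ)*z^2 ≤ 2*(m:ℝ)*(1/(4*(m:ℝ)^2)) := this
          _ = 1/(2*(m:ℝ)) := by field_simp; ring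
      have h2minv : 1/(2*(m:ℝ)) ≤ 1/2 := one_div_le_one_div_of_le (by norm_num) (by linarith)
      calc (1:ℝ)/2 ≤ 1 - 2*(m:ℝ)*z^2 := by linarith
        _ = 1 + (2*m : ℕ) * (-z^2) := by push_cast; ring
        _ ≤ (1 + -z^2)^(2*m) := hbern
        _ = (1 - z^2)^(2*m) := by ring_nf
    rw [hV0] at hstep
    simp only [sub_zero] at hstep
    have h12 : 1/(2*(m:ℝ)) ≤ 1 := by
      rw [div_le_one (by positivity)]; linarith
    have hmono := hVmono h12
    calc 1/(4*(m:ℝ)) = 1/2 * (1/(2*(m:ℝ))) := by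
          rw [div_mul_eq_mul_div, one_mul, div_div]
          ring
      _ ≤ V.eval (1/(2*(m:ℝ))) := hstep
      _ ≤ V₁ := hmono
  have hV₁pos : 0 < V₁ := lt_of_lt_of_le (by positivity) hV₁low
  have hVtop : V₁ - V.eval (3/4) ≤ (7/16 : ℝ)^(2*m) * (1/4) := by
    have hstep : V.eval 1 - V.eval (3/4) ≤ (7/16:ℝ)^(2*m) * (1 - 3/4) := by
      apply eval_sub_le_of_deriv_le (by norm_num)
      intro z hz
      obtain ⟨hz1, hz2⟩ := hz
      rw [hV', hv_eval]
      have h1 : 0 ≤ 1 - z^2 := by nlinarith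
      have h2 : 1 - z^2 ≤ 7/16 := by nlinarith
      exact pow_le_pow_left₀ h1 h2 _
    rw [← hV₁def] at hstep
    calc V₁ - V.eval (3/4) ≤ (7/16:ℝ)^(2*m) * (1 - 3/4) := hstep
      _ = (7/16:ℝ)^(2*m) * (1/4) := by norm_num
  have hB34 : 1 - ε ≤ V.eval (3/4) / V₁ := by
    have hinv : V₁⁻¹ ≤ 4*(m:ℝ) := by
      have h1 : (0:ℝ) < 1/(4*(m:ℝ)) := by positivity
      have := inv_anti₀ h1 hV₁low
      rw [one_div, inv_inv] at this
      exact this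
    have hq : (7/16:ℝ)^(2*m) = (49/256:ℝ)^m := by
      rw [pow_mul]
      norm_num
    have hm_exp : (m:ℝ) ≤ Real.exp ((m:ℝ)/2) := nat_le_exp_half m
    have h4925 : (49/256:ℝ) ≤ Real.exp (-(3/2)) := const_le_exp_neg_three_half
    have hqm : (49/256:ℝ)^m ≤ Real.exp (-(3/2) * (m:ℝ)) := by
      calc (49/256:ℝ)^m ≤ (Real.exp (-(3/2)))^m := pow_le_pow_left₀ (by norm_num) h4925 m
        _ = Real.exp ((m:ℝ) * -(3/2)) := by rw [Real.exp_nat_mul]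
        _ = Real.exp (-(3/2) * (m:ℝ)) := by ring_nf
    have hεbound : (m:ℝ) * (49/256:ℝ)^m ≤ ε := by
      calc (m:ℝ)*(49/256:ℝ)^m
          ≤ Real.exp ((m:ℝ)/2) * Real.exp (-(3/2)*(m:ℝ)) := by
            apply mul_le_mul hm_exp hqm (by positivity) (by positivity)
        _ = Real.exp ((m:ℝ)/2 + -(3/2)*(m:ℝ)) := (Real.exp_add _ _).symm
        _ = Real.exp (-(m:ℝ)) := by ring_nf
        _ ≤ Real.exp (-L) := Real.exp_le_exp.2 (by linarith)
        _ = ε := by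
            rw [hLdef, one_div, Real.log_inv, neg_neg, Real.exp_log hε0]
    have hr : (V₁ - V.eval (3/4)) * V₁⁻¹ ≤ ε := by
      have hsub0 : 0 ≤ V₁ - V.eval (3/4) := by
        have := hVmono (show (3/4:ℝ) ≤ 1 by norm_num)
        simp only at this
        rw [hV₁def]
        linarith
      calc (V₁ - V.eval (3/4)) * V₁⁻¹ ≤ ((7/16:ℝ)^(2*m) * (1/4)) * (4*(m:ℝ)) := by
            apply mul_le_mul hVtop hinv (inv_nonneg.2 hV₁pos.le) (by positivity)
        _ = (m:ℝ) * (49/256:ℝ)^m := by rw [hq]; ring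
        _ ≤ ε := hεbound
    have heq : V.eval (3/4)/V₁ = 1 - (V₁ - V.eval (3/4)) * V₁⁻¹ := by
      field_simp
      ring
    rw [heq]
    linarith
  -- the smoothed sign function
  set Sv : ℝ → ℝ := fun x => V.eval (C₀⁻¹ * W.eval x) / V₁ with hSvdef
  have hS_mono : Monotone Sv := by
    intro a b hab
    have h1 : C₀⁻¹ * W.eval a ≤ C₀⁻¹ * W.eval b :=
      mul_le_mul_of_nonneg_left (hWmono hab) (inv_nonneg.2 hC₀pos.le)
    have h2 : V.eval (C₀⁻¹ * W.eval a) ≤ V.eval (C₀⁻¹ * W.eval b) := hVmono h1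
    exact (div_le_div_iff_of_pos_right hV₁pos).2 h2
  have hS2 : Sv 2 = 1 := by
    rw [hSvdef]
    simp only
    rw [← hC₀def, inv_mul_cancel₀ (ne_of_gt hC₀pos), ← hV₁def, div_self (ne_of_gt hV₁pos)]
  have hS_odd : ∀ x : ℝ, Sv (-x) = -Sv x := by
    intro x
    rw [hSvdef]
    simp only
    rw [hWodd, mul_neg, hVodd, neg_div]
  have hS_le_one : ∀ u : ℝ, u ≤ 2 → Sv u ≤ 1 := by
    intro u hu
    rw [← hS2]; exact hS_mono hu
  have hS_ge_neg_one : ∀ u : ℝ, -2 ≤ u → -1 ≤ Sv u := by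
    intro u hu
    have := hS_mono (show -2 ≤ u from hu)
    rw [hS_odd 2, hS2] at this
    exact this
  have hS_hi : ∀ u : ℝ, δ ≤ u → u ≤ 2 → 1 - ε ≤ Sv u := by
    intro u h1 h2
    have hu0 : 0 < u := lt_of_lt_of_le hδ0 h1
    have htl := htail u h1 h2
    have h1δ : 1/u ≤ 1/δ := one_div_le_one_div_of_le hδ0 h1
    have hquarter : (1:ℝ)/δ ≤ C₀/4 := by
      have h4 : (4:ℝ)/δ = 4*(1/δ) := by ring
      linarith
    have hW34 : (3/4) * C₀ ≤ W.eval u := by linarith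
    have hz34 : (3:ℝ)/4 ≤ C₀⁻¹ * W.eval u := by
      have hh := mul_le_mul_of_nonneg_left hW34 (inv_nonneg.2 hC₀pos.le)
      rw [show C₀⁻¹ * ((3/4)*C₀) = (3/4) * (C₀⁻¹ * C₀) by ring,
        inv_mul_cancel₀ (ne_of_gt hC₀pos), mul_one] at hh
      exact hh
    have hmonoV := hVmono hz34
    calc 1 - ε ≤ V.eval (3/4)/V₁ := hB34
      _ ≤ V.eval (C₀⁻¹ * W.eval u)/V₁ := (div_le_div_iff_of_pos_right hV₁pos).2 hmonoV
      _ = Sv u := rfl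
  -- the polynomial
  set Spoly : ℝ[X] := (C V₁⁻¹ * V).comp (C C₀⁻¹ * W) with hSpolydef
  have hSpoly_eval : ∀ x : ℝ, Spoly.eval x = Sv x := by
    intro x
    rw [hSpolydef]
    simp only [eval_comp, eval_mul, eval_C, eval_X]
    rw [hSvdef]
    simp only
    rw [div_eq_inv_mul]
  set P : ℝ[X] := C (1/2 : ℝ) * (Spoly.comp (X + C t) - Spoly.comp (X - C t)) with hPdef
  have hP_eval : ∀ x : ℝ, P.eval x = (Sv (x + t) - Sv (x - t)) / 2 := by
    intro x
    rw [hPdef]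
    simp only [eval_mul, eval_C, eval_sub, eval_comp, eval_add, eval_X, hSpoly_eval]
    ring
  have hPeven : ∀ x : ℝ, P.eval (-x) = P.eval x := by
    intro x
    rw [hP_eval, hP_eval]
    have h1 : -x + t = -(x - t) := by ring
    have h2 : -x - t = -(x + t) := by ring
    rw [h1, h2, hS_odd, hS_odd]
    ring
  -- degree bound
  have hdeg : (P.natDegree : ℝ) ≤ 2000 * (1 / δ) * L := by
    have hgdeg : g.natDegree ≤ N := by
      rcases eq_or_ne g 0 with rfl | hgne
      · simp
      · have hpTdeg : pT.natDegree ≤ N := by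
          rw [hpTdef]
          apply le_trans natDegree_comp_le
          have hT : Tp.natDegree ≤ N := by rw [hTpdef]; exact natDegree_T_le N
          have hX : (C (1/2:ℝ) * X).natDegree ≤ 1 :=
            le_trans (natDegree_C_mul_le _ _) natDegree_X_le
          calc Tp.natDegree * (C (1/2:ℝ)*X).natDegree ≤ N * 1 := Nat.mul_le_mul hT hX
            _ = N := by ring
        have heq : pT.natDegree = 1 + g.natDegree := by
          rw [hg, natDegree_mul X_ne_zero hgne, natDegree_X]
        omega
    have hdW : W.natDegree ≤ 2*N + 1 := by
      have hwdeg : w.natDegree ≤ 2*N := by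
        rw [hwdef]
        apply le_trans natDegree_pow_le
        omega
      calc W.natDegree ≤ w.natDegree + 1 := natDegree_antider_le w
        _ ≤ 2*N + 1 := by omega
    have hdV : V.natDegree ≤ 4*m + 1 := by
      have hv : v.natDegree ≤ 4*m := by
        rw [hvdef]
        apply le_trans natDegree_pow_le
        have h2 : (1 - X^2 : ℝ[X]).natDegree ≤ 2 := by
          apply le_trans (natDegree_sub_le _ _)
          simp [natDegree_one, natDegree_X_pow]
        calc 2*m * (1-X^2:ℝ[X]).natDegree ≤ 2*m*2 := Nat.mul_le_mul_left _ h2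
          _ = 4*m := by ring
      calc V.natDegree ≤ v.natDegree + 1 := natDegree_antider_le v
        _ ≤ 4*m+1 := by omega
    have hdS : Spoly.natDegree ≤ (4*m+1) * (2*N+1) := by
      rw [hSpolydef]
      apply le_trans natDegree_comp_le
      apply Nat.mul_le_mul
      · exact le_trans (natDegree_C_mul_le _ _) hdV
      · exact le_trans (natDegree_C_mul_le _ _) hdW
    have hdP : P.natDegree ≤ (4*m+1)*(2*N+1) := by
      rw [hPdef]
      apply le_trans (natDegree_C_mul_le _ _)
      apply le_trans (natDegree_sub_le _ _)
      apply max_le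
      · apply le_trans natDegree_comp_le
        have hX1 : (X + C t).natDegree ≤ 1 := by
          apply le_trans (natDegree_add_le _ _)
          simp
        calc Spoly.natDegree * (X + C t).natDegree ≤ ((4*m+1)*(2*N+1)) * 1 :=
              Nat.mul_le_mul hdS hX1
          _ = (4*m+1)*(2*N+1) := by ring
      · apply le_trans natDegree_comp_le
        have hX1 : (X - C t).natDegree ≤ 1 := by
          apply le_trans (natDegree_sub_le _ _)
          simp
        calc Spoly.natDegree * (X - C t).natDegree ≤ ((4*m+1)*(2*N+1)) * 1 :=
              Nat.mul_le_mul hdS hX1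
          _ = (4*m+1)*(2*N+1) := by ring
    have hcast : (P.natDegree : ℝ) ≤ (4*(m:ℝ)+1) * (2*(N:ℝ)+1) := by
      calc (P.natDegree : ℝ) ≤ (((4*m+1)*(2*N+1) : ℕ) : ℝ) := by exact_mod_cast hdP
        _ = (4*(m:ℝ)+1)*(2*(N:ℝ)+1) := by push_cast; ring
    have h1 : 4*(m:ℝ)+1 ≤ 12*L := by nlinarith [hmle, hL0]
    have h2 : 2*(N:ℝ)+1 ≤ 94/δ := by
      have h94 : (1:ℝ) ≤ 2/δ := by rw [le_div_iff₀ hδ0]; linarith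
      have heq : (92:ℝ)/δ + 2/δ = 94/δ := by ring
      have heq2 : (92:ℝ)/δ = 2*(46/δ) := by ring
      linarith [hNle]
    have hNnn : (0:ℝ) ≤ 2*(N:ℝ)+1 := by positivity
    calc (P.natDegree:ℝ) ≤ (4*(m:ℝ)+1)*(2*(N:ℝ)+1) := hcast
      _ ≤ (12*L)*(94/δ) := by
          apply mul_le_mul h1 h2 hNnn (by positivity)
      _ = 1128 * (1/δ) * L := by ring
      _ ≤ 2000 * (1/δ) * L := by
          have hpos : (0:ℝ) ≤ (1/δ) * L := by positivity
          nlinarith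
  -- global bound facts
  have ht0 : 0 < t := lt_trans hδ0 htδ
  have ht2 : t ≤ 1 := by linarith
  refine ⟨P, even_coeff_of_eval_even hPeven, hdeg, ?_, ?_, ?_⟩
  · -- |P| ≤ 1 on [-1,1]
    intro x hx
    obtain ⟨hx1, hx2⟩ := hx
    rw [hP_eval, abs_le]
    constructor
    · have := hS_mono (show x - t ≤ x + t by linarith)
      linarith
    · have h1 : Sv (x + t) ≤ 1 := hS_le_one _ (by linarith)
      have h2 : -1 ≤ Sv (x - t) := hS_ge_neg_one _ (by linarith)
      linarith
  · -- outer
    intro x hx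
    have key : ∀ y : ℝ, t + δ ≤ y → y ≤ 1 → P.eval y ∈ Set.Icc (0:ℝ) ε := by
      intro y hy1 hy2
      rw [hP_eval]
      constructor
      · have := hS_mono (show y - t ≤ y + t by linarith)
        linarith
      · have h1 : Sv (y + t) ≤ 1 := hS_le_one _ (by linarith)
        have h2 : 1 - ε ≤ Sv (y - t) := hS_hi _ (by linarith) (by linarith)
        have hε0' : 0 ≤ ε := le_of_lt hε0
        linarith
    rcases hx with hx | hx
    · obtain ⟨hx1, hx2⟩ := hx
      have h := hPeven (-x)
      rw [neg_neg] at h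
      rw [h]
      exact key (-x) (by linarith) (by linarith)
    · exact key x hx.1 hx.2
  · -- inner
    intro x hx
    obtain ⟨hx1, hx2⟩ := hx
    rw [hP_eval]
    constructor
    · have h1 : 1 - ε ≤ Sv (x + t) := hS_hi _ (by linarith) (by linarith)
      have h2 : Sv (x - t) ≤ -(1 - ε) := by
        have h3 : 1 - ε ≤ Sv (t - x) := hS_hi _ (by linarith) (by linarith)
        have h4 : Sv (x - t) = -Sv (t - x) := by
          rw [show x - t = -(t - x) by ring, hS_odd]
        rw [h4]
        linarith
      linarith
    · have h1 : Sv (x + t) ≤ 1 := hS_le_one _ (by linarith)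
      have h2 : -1 ≤ Sv (x - t) := hS_ge_neg_one _ (by linarith)
      linarith

end Main

end RectAux

/-- Polynomial approximation to the rectangle function: there is a constant `c > 0` such
that for all `δ, ε ∈ (0, 1/2)` and `t ∈ (δ, 1-δ]` there is an even real polynomial `P` of
degree `O((1/δ) log(1/ε))` with `|P| ≤ 1` on `[-1,1]`, `P ∈ [0, ε]` on
`[-1, -t-δ] ∪ [t+δ, 1]`, and `P ∈ [1-ε, 1]` on `[-t+δ, t-δ]`. -/
theorem exists_poly_approx_rectangle :
    ∃ c : ℝ, 0 < c ∧
      ∀ δ ε : ℝ, δ ∈ Set.Ioo (0 : ℝ) (1 / 2) → ε ∈ Set.Ioo (0 : ℝ) (1 / 2) →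
        ∀ t ∈ Set.Ioc δ (1 - δ),
          ∃ P : Polynomial ℝ,
            (∀ n : ℕ, P.coeff n ≠ 0 → Even n) ∧
            (P.natDegree : ℝ) ≤ c * (1 / δ) * Real.log (1 / ε) ∧
            (∀ x ∈ Set.Icc (-1 : ℝ) 1, |P.eval x| ≤ 1) ∧
            (∀ x ∈ Set.Icc (-1 : ℝ) (-t - δ) ∪ Set.Icc (t + δ) 1,
              P.eval x ∈ Set.Icc (0 : ℝ) ε) ∧
            (∀ x ∈ Set.Icc (-t + δ) (t - δ), P.eval x ∈ Set.Icc (1 - ε) 1) := by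
  refine ⟨2000, by norm_num, ?_⟩
  intro δ ε hδ hε t ht
  exact RectAux.construction hδ.1 hδ.2 hε.1 hε.2 ht.1 ht.2
end
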